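/- arXiv:1301.2606 — 2 statements merged into one kernel-verified Lean document; each statement's English description precedes it below -/
import Mathlib

section
/- Let p and q be affine invariant points on 𝒦ₙ and suppose p is proper. For K ∈ 𝒦ₙ define φ_q(K) = inf{t ≥ 0 : q(K) − p(K) ∈ t(K − p(K))}. Then: φ_q: 𝒦ₙ → ℝ₊ is continuous; there exists a constant c = c(q) > 0 such that q(K) − p(K) ∈ c(K − p(K)) for every K ∈ 𝒦ₙ; and if moreover q is proper, then c can be chosen in (0,1). -/
open scoped Pointwise
open MeasureTheory

noncomputable section

/-- Euclidean space `ℝⁿ`. -/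
abbrev EucSp (n : ℕ) := EuclideanSpace ℝ (Fin n)

/-- The space `𝒦ₙ` of convex bodies in `ℝⁿ`: compact convex sets with nonempty interior,
equipped (as a subtype of `ConvexBody`) with the Hausdorff metric. -/
def Kn (n : ℕ) : Type :=
  {K : ConvexBody (EucSp n) // (interior (K : Set (EucSp n))).Nonempty}

noncomputable instance (n : ℕ) : MetricSpace (Kn n) :=
  Subtype.metricSpace

/-- The underlying set of a convex body in `𝒦ₙ`. -/
def Kn.toSet {n : ℕ} (K : Kn n) : Set (EucSp n) := (K.1 : Set (EucSp n))

/-- An affine equivalence of `ℝⁿ` as a homeomorphism. -/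
def affEquivHomeo {n : ℕ} (T : EucSp n ≃ᵃ[ℝ] EucSp n) : EucSp n ≃ₜ EucSp n where
  toEquiv := T.toEquiv
  continuous_toFun := T.toAffineMap.continuous_of_finiteDimensional
  continuous_invFun := T.symm.toAffineMap.continuous_of_finiteDimensional

/-- The image of a convex body under an invertible affine map, as a convex body. -/
def affImage {n : ℕ} (T : EucSp n ≃ᵃ[ℝ] EucSp n) (K : Kn n) : Kn n :=
  ⟨⟨(T : EucSp n → EucSp n) '' K.toSet,
    (K.1.convex.affine_image T.toAffineMap : Convex ℝ ((T : EucSp n → EucSp n) '' K.toSet)),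
    K.1.isCompact.image (affEquivHomeo T).continuous,
    K.1.nonempty.image _⟩,
    by
      obtain ⟨x, hx⟩ := K.2
      exact ⟨T x, ((affEquivHomeo T).image_interior (K.1 : Set (EucSp n))) ▸
        Set.mem_image_of_mem _ hx⟩⟩

/-- An affine invariant point: a continuous map `p : 𝒦ₙ → ℝⁿ` such that
`p (T K) = T (p K)` for every invertible affine map `T`. -/
def IsAffineInvariantPoint {n : ℕ} (p : Kn n → EucSp n) : Prop :=
  Continuous p ∧ ∀ (T : EucSp n ≃ᵃ[ℝ] EucSp n) (K : Kn n), p (affImage T K) = T (p K)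

/-- An affine invariant set mapping: a continuous map `A : 𝒦ₙ → 𝒦ₙ` such that
`A (T K) = T (A K)` for every invertible affine map `T`. -/
def IsAffineInvariantSetMap {n : ℕ} (A : Kn n → Kn n) : Prop :=
  Continuous A ∧ ∀ (T : EucSp n ≃ᵃ[ℝ] EucSp n) (K : Kn n), A (affImage T K) = affImage T (A K)

/-- The centroid `g(S) = (∫_S x dx) / vol(S)` of a set `S ⊆ ℝⁿ`. -/
def centroid {n : ℕ} (S : Set (EucSp n)) : EucSp n :=
  (volume S).toReal⁻¹ • ∫ x in S, x

/-- `𝔓ₙ(K) = {p(K) : p ∈ 𝔓ₙ}`. -/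
def PnSet (n : ℕ) (K : Kn n) : Set (EucSp n) :=
  {x | ∃ p : Kn n → EucSp n, IsAffineInvariantPoint p ∧ p K = x}

end

/-!
Write `φ K` for the gauge of `K - p K` evaluated at `q K - p K`; this is the infimum in the
statement. Because `p K` is interior to `K` and `p` is continuous, a fixed ball around `p K` stays
inside all bodies Hausdorff-close to a given one, and the gauges of Hausdorff-close convex sets
containing a common ball are close; so `φ` is continuous. Affine invariance of `p` and `q` makes `φ`
constant on affine orbits. A simplex of maximal volume inside `K` gives, by Cramer's rule, an
affine image of `K` squeezed between a fixed simplex and the cube `[-1, 1]ⁿ`, and the convex bodies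
squeezed this way form a compact family (Blaschke selection). Hence `φ` attains its supremum `M`: every
`c > M` works, and `M < 1` when `q` is proper, as then `q K - p K` is interior to `K - p K`.
-/

open Metric Set Filter Topology TopologicalSpace

section Gauge

variable {E : Type*} [AddCommGroup E] [Module ℝ E]

theorem sInf_setOf_nonneg_mem_smul_eq_gauge {s : Set E} (hs : s.Nonempty) (v : E) :
    sInf {t : ℝ | 0 ≤ t ∧ v ∈ t • s} = gauge s v := by
  rcases eq_or_ne v 0 with rfl | hv
  · have h0 : (0 : ℝ) ∈ {t : ℝ | 0 ≤ t ∧ (0 : E) ∈ t • s} :=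
      ⟨le_rfl, by rw [zero_smul_set hs]; exact Set.zero_mem_zero⟩
    rw [gauge_zero]
    exact le_antisymm (csInf_le ⟨0, fun t ht => ht.1⟩ h0) (le_csInf ⟨0, h0⟩ fun t ht => ht.1)
  · rw [gauge_def]
    congr 1
    ext t
    refine ⟨fun ⟨ht, hvt⟩ => ⟨ht.lt_of_ne ?_, hvt⟩, fun ⟨ht, hvt⟩ => ⟨le_of_lt ht, hvt⟩⟩
    rintro rfl
    rw [zero_smul_set hs] at hvt
    exact hv hvt

theorem mem_smul_of_gauge_lt {s : Set E} (hs : Convex ℝ s) (h₀ : (0 : E) ∈ s)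
    (habs : Absorbent ℝ s) {v : E} {c : ℝ} (h : gauge s v < c) : v ∈ c • s := by
  have hv : v ∈ {x | gauge s x ≤ gauge s v} := le_refl (gauge s v)
  rw [setOfPred_gauge_le_eq hs h₀ habs (gauge_nonneg v)] at hv
  exact mem_iInter₂.mp hv c h

theorem gauge_image_linearEquiv {F : Type*} [AddCommGroup F] [Module ℝ F] (L : E ≃ₗ[ℝ] F)
    (s : Set E) (v : E) : gauge (L '' s) (L v) = gauge s v := by
  simp only [gauge_def, ← image_smul_set, L.injective.mem_set_image]

end Gauge

section Approximation

variable {E : Type*} [NormedAddCommGroup E]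

theorem closedBall_subset_of_forall_exists_dist_le [InnerProductSpace ℝ E] [CompleteSpace E]
    {s t : Set E} {c : E} {a ε : ℝ} (ht : Convex ℝ t) (htc : IsClosed t) (hε : 0 ≤ ε)
    (hs : closedBall c a ⊆ s) (h : ∀ x ∈ s, ∃ y ∈ t, dist x y ≤ ε) :
    closedBall c (a - ε) ⊆ t := by
  intro u hu
  by_contra hut
  have hball : ∀ d : E, ‖d‖ ≤ ε → u + d ∈ s := fun d hd => hs <| by
    rw [mem_closedBall] at hu ⊢
    calc dist (u + d) c ≤ dist u c + ‖d‖ := by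
          rw [dist_eq_norm, dist_eq_norm, add_sub_right_comm]; exact norm_add_le _ _
      _ ≤ a := by linarith
  have htne : t.Nonempty :=
    let ⟨y, hy, _⟩ := h u (by simpa using hball 0 (by simpa using hε))
    ⟨y, hy⟩
  -- `t` lies in the half-space `⟪u - y, · - y⟫ ≤ 0` at its nearest point `y` to `u`, so pushing
  -- `u` a distance `ε` further from `y` gives a point of `s` farther than `ε` from `t`.
  obtain ⟨y, hy, hyu⟩ := exists_norm_eq_iInf_of_complete_convex htne htc.isComplete ht u
  have hproj := (norm_eq_iInf_iff_real_inner_le_zero ht hy).mp hyu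
  set d := u - y
  have hd : 0 < ‖d‖ := norm_pos_iff.mpr (sub_ne_zero.mpr fun h => hut (h ▸ hy))
  obtain ⟨w, hw, hxw⟩ := h _ (hball ((ε / ‖d‖) • d) (by
    rw [norm_smul, Real.norm_of_nonneg (by positivity), div_mul_cancel₀ _ hd.ne']))
  have hlow : ‖d‖ ^ 2 + ε * ‖d‖ ≤ inner ℝ d (u + (ε / ‖d‖) • d - w) := by
    have : u + (ε / ‖d‖) • d - w = (1 + ε / ‖d‖) • d - (w - y) := by
      simp only [d, add_smul, one_smul]; abel
    rw [this, inner_sub_right, inner_smul_right, real_inner_self_eq_norm_sq]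
    have := hproj w hw
    field_simp
    nlinarith
  have hup : inner ℝ d (u + (ε / ‖d‖) • d - w) ≤ ‖d‖ * ε :=
    (real_inner_le_norm _ _).trans (mul_le_mul_of_nonneg_left (by rwa [← dist_eq_norm]) hd.le)
  nlinarith

variable [NormedSpace ℝ E]

theorem subset_smul_of_forall_exists_dist_le {s t : Set E} {r ε : ℝ} (hs : Convex ℝ s)
    (hr : 0 < r) (hsr : closedBall (0 : E) r ⊆ s) (hε : 0 ≤ ε)
    (h : ∀ x ∈ t, ∃ y ∈ s, dist x y ≤ ε) : t ⊆ (1 + ε / r) • s := by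
  intro x hx
  obtain ⟨y, hy, hxy⟩ := h x hx
  have hxy' : x - y ∈ (ε / r) • s := by
    refine smul_set_mono hsr ?_
    rw [smul_closedBall _ _ hr.le, smul_zero, Real.norm_of_nonneg (by positivity),
      div_mul_cancel₀ _ hr.ne', mem_closedBall, dist_zero_right, ← dist_eq_norm]
    exact hxy
  rw [hs.add_smul zero_le_one (by positivity), one_smul]
  exact ⟨y, hy, x - y, hxy', add_sub_cancel y x⟩

theorem gauge_le_mul_gauge_of_forall_exists_dist_le {s t : Set E} {r ε : ℝ} (hs : Convex ℝ s)
    (hr : 0 < r) (hsr : closedBall (0 : E) r ⊆ s) (hε : 0 ≤ ε) (ht : Absorbent ℝ t)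
    (h : ∀ x ∈ t, ∃ y ∈ s, dist x y ≤ ε) (v : E) :
    gauge s v ≤ (1 + ε / r) * gauge t v := by
  have := gauge_mono ht (subset_smul_of_forall_exists_dist_le hs hr hsr hε h) v
  rwa [gauge_smul_left_of_nonneg (by positivity), Pi.smul_apply, smul_eq_mul,
    inv_mul_le_iff₀ (by positivity)] at this

theorem abs_gauge_sub_gauge_le {s t : Set E} {r ε : ℝ} (hs : Convex ℝ s) (ht : Convex ℝ t)
    (hr : 0 < r) (hsr : closedBall (0 : E) r ⊆ s) (htr : closedBall (0 : E) r ⊆ t) (hε : 0 ≤ ε)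
    (hst : ∀ x ∈ s, ∃ y ∈ t, dist x y ≤ ε) (hts : ∀ x ∈ t, ∃ y ∈ s, dist x y ≤ ε) (v w : E) :
    |gauge s v - gauge t w| ≤ ‖v - w‖ / r + ε / r * (1 + ε / r) * gauge t w := by
  have hs₀ : s ∈ 𝓝 (0 : E) := mem_of_superset (closedBall_mem_nhds 0 hr) hsr
  have ht₀ : t ∈ 𝓝 (0 : E) := mem_of_superset (closedBall_mem_nhds 0 hr) htr
  have hlip : |gauge s v - gauge s w| ≤ ‖v - w‖ / r := by
    have hsub : ∀ x y : E, gauge s x - gauge s y ≤ ‖x - y‖ / r := fun x y => by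
      have h₁ := gauge_add_le hs (absorbent_nhds_zero hs₀) y (x - y)
      have h₂ := mul_gauge_le_norm (x := x - y) (ball_subset_closedBall.trans hsr)
      rw [add_sub_cancel] at h₁
      rw [le_div_iff₀ hr]
      nlinarith
    exact abs_sub_le_iff.mpr ⟨hsub v w, by rw [norm_sub_rev]; exact hsub w v⟩
  have h₁ := gauge_le_mul_gauge_of_forall_exists_dist_le hs hr hsr hε (absorbent_nhds_zero ht₀)
    hts w
  have h₂ := gauge_le_mul_gauge_of_forall_exists_dist_le ht hr htr hε (absorbent_nhds_zero hs₀)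
    hst w
  have hη : 0 ≤ ε / r := by positivity
  have hcmp : |gauge s w - gauge t w| ≤ ε / r * (1 + ε / r) * gauge t w := by
    have := gauge_nonneg (s := t) w
    rw [abs_sub_le_iff]
    have hηη := mul_nonneg (mul_nonneg hη hη) this
    constructor <;> nlinarith
  calc |gauge s v - gauge t w| ≤ |gauge s v - gauge s w| + |gauge s w - gauge t w| :=
        abs_sub_le _ _ _
    _ ≤ _ := add_le_add hlip hcmp

end Approximation

section Translate

variable {E : Type*} [NormedAddCommGroup E]

theorem Convex.image_sub_const [Module ℝ E] {s : Set E} (hs : Convex ℝ s) (x : E) :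
    Convex ℝ ((· - x) '' s) := by
  simpa only [sub_eq_neg_add] using hs.translate (-x)

theorem sub_mem_interior_image_sub_const {s : Set E} {x y : E} (hy : y ∈ interior s) :
    y - x ∈ interior ((· - x) '' s) := by
  show y - x ∈ interior (Homeomorph.subRight x '' s)
  rw [← (Homeomorph.subRight x).image_interior]
  exact mem_image_of_mem _ hy

theorem closedBall_zero_subset_image_sub_const {s : Set E} {x : E} {r : ℝ}
    (h : closedBall x r ⊆ s) : closedBall (0 : E) r ⊆ (· - x) '' s :=
  fun y hy => ⟨y + x, h (by simpa using hy), add_sub_cancel_right y x⟩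

theorem image_sub_const_image_affineEquiv [Module ℝ E] (T : E ≃ᵃ[ℝ] E) (s : Set E) (x : E) :
    (· - T x) '' (T '' s) = T.linear '' ((· - x) '' s) := by
  simp only [image_image]
  refine image_congr fun y _ => ?_
  simpa using (T.toAffineMap.linearMap_vsub y x).symm

end Translate

section NonemptyCompacts

theorem TopologicalSpace.NonemptyCompacts.isClosed_setOf_superset {α : Type*} [MetricSpace α]
    (S : Set α) : IsClosed {A : NonemptyCompacts α | S ⊆ A} := by
  have : {A : NonemptyCompacts α | S ⊆ A} =
      ⋂ x ∈ S, (fun A : NonemptyCompacts α => infDist x A) ⁻¹' {0} := by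
    ext A
    simp only [mem_ofPred_eq, subset_def, mem_iInter, mem_preimage, mem_singleton_iff]
    exact forall₂_congr fun x _ => A.isCompact.isClosed.mem_iff_infDist_zero A.nonempty
  rw [this]
  exact isClosed_biInter fun x _ =>
    isClosed_singleton.preimage (lipschitz_infDist_set x).continuous

variable {E : Type*} [NormedAddCommGroup E] [NormedSpace ℝ E]

theorem TopologicalSpace.NonemptyCompacts.isClosed_setOf_convex :
    IsClosed {A : NonemptyCompacts E | Convex ℝ (A : Set E)} := by
  refine isClosed_of_closure_subset fun A hA x hx y hy a b ha hb hab => ?_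
  rw [← A.isCompact.isClosed.closure_eq, Metric.mem_closure_iff]
  intro ε hε
  obtain ⟨B, hB, hAB⟩ := Metric.mem_closure_iff.mp hA (ε / 2) (by positivity)
  rw [NonemptyCompacts.dist_eq] at hAB
  have hfin : hausdorffEDist (A : Set E) B ≠ ⊤ := hausdorffEDist_ne_top_of_nonempty_of_bounded
    A.nonempty B.nonempty A.isCompact.isBounded B.isCompact.isBounded
  obtain ⟨x', hx', hxx'⟩ := exists_dist_lt_of_hausdorffDist_lt hx hAB hfin
  obtain ⟨y', hy', hyy'⟩ := exists_dist_lt_of_hausdorffDist_lt hy hAB hfin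
  obtain ⟨w, hw, hw'⟩ := exists_dist_lt_of_hausdorffDist_lt' (hB hx' hy' ha hb hab) hAB hfin
  refine ⟨w, hw, ?_⟩
  have hcomb : dist (a • x + b • y) (a • x' + b • y') ≤ ε / 2 := calc
    _ ≤ dist (a • x) (a • x') + dist (b • y) (b • y') := dist_add_add_le _ _ _ _
    _ = a * dist x x' + b * dist y y' := by
      rw [dist_smul₀, dist_smul₀, Real.norm_of_nonneg ha, Real.norm_of_nonneg hb]
    _ ≤ a * (ε / 2) + b * (ε / 2) := by gcongr
    _ = ε / 2 := by rw [← add_mul, hab, one_mul]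
  calc dist (a • x + b • y) w
      ≤ dist (a • x + b • y) (a • x' + b • y') + dist (a • x' + b • y') w := dist_triangle _ _ _
    _ < ε / 2 + ε / 2 := by rw [dist_comm _ w]; exact add_lt_add_of_le_of_lt hcomb hw'
    _ = ε := add_halves ε

theorem TopologicalSpace.NonemptyCompacts.isCompact_setOf_subset_convex_superset {S C : Set E}
    (hC : IsCompact C) :
    IsCompact {A : NonemptyCompacts E | (A : Set E) ⊆ C ∧ Convex ℝ (A : Set E) ∧ S ⊆ A} :=
  (NonemptyCompacts.isCompact_subsets_of_isCompact hC).inter_right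
    (isClosed_setOf_convex.inter (isClosed_setOf_superset S))

end NonemptyCompacts

theorem exists_basis_abs_repr_le_one {E : Type*} [NormedAddCommGroup E] [NormedSpace ℝ E]
    [FiniteDimensional ℝ E] {m : ℕ} (e : Module.Basis (Fin m) ℝ E) {K : Set E} (hK : IsCompact K)
    (hint : (interior K).Nonempty) :
    ∃ (x₀ : E) (b : Module.Basis (Fin m) ℝ E), x₀ ∈ K ∧ (∀ i, x₀ + b i ∈ K) ∧
      ∀ x ∈ K, ∀ i, |b.repr (x - x₀) i| ≤ 1 := by
  set vol : (Fin (m + 1) → E) → ℝ := fun v => |e.det fun i => v i.succ - v 0|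
  have hvol : Continuous vol := by
    have : Continuous fun w : Fin m → E => e.det w := by
      simp_rw [e.det_apply]
      refine Continuous.matrix_det (continuous_matrix fun i j => ?_)
      simp only [Module.Basis.toMatrix_apply, ← Module.Basis.coord_apply]
      exact (e.coord i).continuous_of_finiteDimensional.comp (continuous_apply j)
    exact continuous_abs.comp (this.comp (continuous_pi fun j =>
      (continuous_apply j.succ).sub (continuous_apply 0)))
  obtain ⟨x₀, hx₀⟩ := hint
  have hsimplex : ∃ w ∈ univ.pi fun _ => K, vol w ≠ 0 := by
    have hnear : ∀ᶠ t in 𝓝[>] (0 : ℝ), ∀ i, x₀ + t • e i ∈ K := by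
      refine eventually_all.mpr fun i => nhdsWithin_le_nhds ?_
      have : Tendsto (fun t : ℝ => x₀ + t • e i) (𝓝 0) (𝓝 x₀) := by
        simpa using ((continuous_id.smul continuous_const).const_add x₀).tendsto (0 : ℝ)
      exact this (mem_interior_iff_mem_nhds.mp hx₀)
    obtain ⟨t, ht, htpos⟩ := (hnear.and self_mem_nhdsWithin).exists
    refine ⟨Fin.cons x₀ fun i => x₀ + t • e i, fun j _ => ?_, ?_⟩
    · cases j using Fin.cases with
      | zero => exact interior_subset hx₀
      | succ i => exact ht i
    · have := e.det.toMultilinearMap.map_smul_univ (fun _ => t) e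
      simp only [AlternatingMap.coe_multilinearMap, Module.Basis.det_self] at this
      simp [vol, this, htpos.ne']
  obtain ⟨w, hwK, hw⟩ := hsimplex
  obtain ⟨v, hvK, hvmax⟩ := (isCompact_univ_pi fun _ => hK).exists_isMaxOn ⟨w, hwK⟩
    hvol.continuousOn
  set edges : Fin m → E := fun i => v i.succ - v 0
  have hdet : e.det edges ≠ 0 := fun h =>
    hw (le_antisymm ((hvmax hwK).trans (by simp [vol, edges, h])) (abs_nonneg _))
  have hbasis := (e.is_basis_iff_det).mpr (isUnit_iff_ne_zero.mpr hdet)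
  refine ⟨v 0, Module.Basis.mk hbasis.1 hbasis.2.ge, hvK 0 trivial,
    fun i => by simpa [edges] using hvK i.succ trivial, fun x hx i => ?_⟩
  -- Cramer's rule: replacing the vertex `v i.succ` by `x` scales the volume by this coordinate.
  have hcramer := congrArg (· (x - v 0))
    (e.det_smul_mk_coord_eq_det_update hbasis.1 hbasis.2.ge i)
  simp only [LinearMap.smul_apply, Module.Basis.coord_apply, smul_eq_mul,
    MultilinearMap.toLinearMap_apply, AlternatingMap.coe_multilinearMap] at hcramer
  have hedges : (fun j => Function.update v i.succ x j.succ - Function.update v i.succ x 0) =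
      Function.update edges i (x - v 0) := by
    have h₀ : Function.update v i.succ x 0 = v 0 :=
      Function.update_of_ne (Fin.succ_ne_zero i).symm _ _
    ext j : 1
    rcases eq_or_ne j i with rfl | hj
    · simp [edges, h₀]
    · simp [edges, hj, h₀]
  have hle : vol (Function.update v i.succ x) ≤ vol v := hvmax fun j _ => by
    rcases eq_or_ne j i.succ with rfl | hj
    · simpa using hx
    · simpa [hj] using hvK j trivial
  simp only [vol, hedges, ← hcramer, abs_mul] at hle
  exact le_of_mul_le_mul_left (by simpa using hle) (abs_pos.mpr hdet)

section Kn

variable {n : ℕ}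

theorem Kn.exists_dist_le_dist {K L : Kn n} {x : EucSp n} (hx : x ∈ K.toSet) :
    ∃ y ∈ L.toSet, dist x y ≤ dist K L := by
  obtain ⟨y, hy, hxy⟩ := L.1.isCompact.exists_infDist_eq_dist L.1.nonempty x
  exact ⟨y, hy, hxy ▸ infDist_le_hausdorffDist_of_mem hx ConvexBody.hausdorffEDist_ne_top⟩

theorem Kn.exists_dist_sub_const_le (K L : Kn n) (x y : EucSp n) :
    ∀ u ∈ (· - x) '' K.toSet, ∃ w ∈ (· - y) '' L.toSet, dist u w ≤ dist K L + dist x y := by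
  rintro _ ⟨u, hu, rfl⟩
  obtain ⟨w, hw, huw⟩ := Kn.exists_dist_le_dist (L := L) hu
  exact ⟨w - y, mem_image_of_mem _ hw, (dist_sub_sub_le u x w y).trans (by gcongr)⟩

theorem Kn.eventually_closedBall_subset {p : Kn n → EucSp n} {K₀ : Kn n} (hp : ContinuousAt p K₀)
    (h : p K₀ ∈ interior K₀.toSet) : ∃ ρ > 0, ∀ᶠ K in 𝓝 K₀, closedBall (p K) ρ ⊆ K.toSet := by
  obtain ⟨ε, hε, hεK₀⟩ := nhds_basis_closedBall.mem_iff.mp (mem_interior_iff_mem_nhds.mp h)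
  refine ⟨ε / 3, by positivity, ?_⟩
  filter_upwards [ball_mem_nhds K₀ (show 0 < ε / 3 by positivity),
    hp (ball_mem_nhds (p K₀) (show 0 < ε / 3 by positivity))] with K hK hpK
  rw [mem_ball] at hK
  rw [mem_preimage, mem_ball] at hpK
  have hK₀K := closedBall_subset_of_forall_exists_dist_le K.1.convex K.1.isClosed dist_nonneg
    hεK₀ fun x hx => Kn.exists_dist_le_dist (L := K) hx
  refine (closedBall_subset_closedBall' ?_).trans hK₀K
  rw [dist_comm K₀]
  linarith

noncomputable def centeredGauge (p q : Kn n → EucSp n) (K : Kn n) : ℝ :=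
  gauge ((· - p K) '' K.toSet) (q K - p K)

theorem continuous_centeredGauge {p q : Kn n → EucSp n} (hp : Continuous p) (hq : Continuous q)
    (hproper : ∀ K, p K ∈ interior K.toSet) : Continuous (centeredGauge p q) := by
  refine continuous_iff_continuousAt.mpr fun K₀ => ?_
  obtain ⟨ρ, hρ, hball⟩ := Kn.eventually_closedBall_subset hp.continuousAt (hproper K₀)
  set ε : Kn n → ℝ := fun K => dist K K₀ + dist (p K) (p K₀)
  set bound : Kn n → ℝ := fun K => ‖(q K - p K) - (q K₀ - p K₀)‖ / ρ +
    ε K / ρ * (1 + ε K / ρ) * centeredGauge p q K₀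
  have hbound : ∀ᶠ K in 𝓝 K₀, dist (centeredGauge p q K) (centeredGauge p q K₀) ≤ bound K := by
    filter_upwards [hball] with K hK
    rw [Real.dist_eq]
    refine abs_gauge_sub_gauge_le (K.1.convex.image_sub_const _) (K₀.1.convex.image_sub_const _)
      hρ (closedBall_zero_subset_image_sub_const hK)
      (closedBall_zero_subset_image_sub_const hball.self_of_nhds) (by positivity)
      (Kn.exists_dist_sub_const_le K K₀ _ _) ?_ _ _
    intro u hu
    obtain ⟨w, hw, huw⟩ := Kn.exists_dist_sub_const_le K₀ K (p K₀) (p K) u hu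
    exact ⟨w, hw, by rwa [dist_comm K₀, dist_comm (p K₀)] at huw⟩
  have hlim : Tendsto bound (𝓝 K₀) (𝓝 0) := by
    have : Continuous bound := by
      simp only [bound, ε]
      fun_prop
    simpa [bound, ε] using this.tendsto K₀
  exact tendsto_iff_dist_tendsto_zero.mpr
    (squeeze_zero' (Eventually.of_forall fun _ => dist_nonneg) hbound hlim)

theorem centeredGauge_affImage {p q : Kn n → EucSp n} (hp : IsAffineInvariantPoint p)
    (hq : IsAffineInvariantPoint q) (T : EucSp n ≃ᵃ[ℝ] EucSp n) (K : Kn n) :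
    centeredGauge p q (affImage T K) = centeredGauge p q K := by
  have hv : q (affImage T K) - p (affImage T K) = T.linear (q K - p K) := by
    simpa [hp.2, hq.2] using (T.toAffineMap.linearMap_vsub (q K) (p K)).symm
  rw [centeredGauge, hv, hp.2, show (affImage T K).toSet = T '' K.toSet from rfl,
    image_sub_const_image_affineEquiv, gauge_image_linearEquiv, centeredGauge]

def unitSimplex (n : ℕ) : Set (EucSp n) :=
  convexHull ℝ (insert 0 (range (EuclideanSpace.basisFun (Fin n) ℝ)))

def unitCube (n : ℕ) : Set (EucSp n) := {y | ∀ i, |y i| ≤ 1}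

theorem interior_unitSimplex_nonempty : (interior (unitSimplex n)).Nonempty := by
  rw [unitSimplex, interior_convexHull_nonempty_iff_affineSpan_eq_top,
    ← AffineSubspace.direction_eq_top_iff_of_nonempty ((insert_nonempty _ _).affineSpan ℝ),
    direction_affineSpan, vectorSpan_eq_span_vsub_set_right ℝ (mem_insert 0 _), eq_top_iff,
    ← (EuclideanSpace.basisFun (Fin n) ℝ).toBasis.span_eq]
  refine Submodule.span_mono ?_
  rintro _ ⟨i, rfl⟩
  exact ⟨_, mem_insert_of_mem _ ⟨i, rfl⟩, by simp⟩

theorem isCompact_unitCube : IsCompact (unitCube n) := by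
  have : unitCube n = EuclideanSpace.equiv (Fin n) ℝ ⁻¹' univ.pi fun _ => Icc (-1) 1 := by
    ext y
    simp only [unitCube, mem_ofPred_eq, mem_preimage, mem_univ_pi, mem_Icc, abs_le]
    rfl
  rw [this]
  exact (EuclideanSpace.equiv (Fin n) ℝ).toHomeomorph.isCompact_preimage.mpr
    (isCompact_univ_pi fun _ => isCompact_Icc)

theorem Kn.exists_unitSimplex_subset_subset_unitCube (K : Kn n) :
    ∃ T : EucSp n ≃ᵃ[ℝ] EucSp n,
      unitSimplex n ⊆ (affImage T K).toSet ∧ (affImage T K).toSet ⊆ unitCube n := by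
  obtain ⟨x₀, b, hx₀, hb, hrepr⟩ := exists_basis_abs_repr_le_one
    (EuclideanSpace.basisFun (Fin n) ℝ).toBasis K.1.isCompact K.2
  set T : EucSp n ≃ᵃ[ℝ] EucSp n := (AffineEquiv.vaddConst ℝ x₀).symm.trans
    (b.equivFun.trans (EuclideanSpace.equiv (Fin n) ℝ).symm.toLinearEquiv).toAffineEquiv
  have hT : ∀ x i, T x i = b.repr (x - x₀) i := fun x i => rfl
  refine ⟨T, convexHull_min ?_ (affImage T K).1.convex, ?_⟩
  · rintro _ (rfl | ⟨i, rfl⟩)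
    · exact ⟨x₀, hx₀, by ext i; simp [hT]⟩
    · exact ⟨x₀ + b i, hb i, by ext j; simp [hT, Finsupp.single_apply, eq_comm]⟩
  · rintro _ ⟨x, hx, rfl⟩ i
    rw [hT]
    exact hrepr x hx i

instance (n : ℕ) : Nonempty (Kn n) :=
  ⟨⟨⟨closedBall 0 1, convex_closedBall 0 1, isCompact_closedBall 0 1,
    nonempty_closedBall.mpr zero_le_one⟩,
    ⟨0, by
      show (0 : EucSp n) ∈ interior (closedBall 0 1)
      rw [interior_closedBall _ one_ne_zero]
      exact mem_ball_self one_pos⟩⟩⟩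

def Kn.toNonemptyCompacts (K : Kn n) : NonemptyCompacts (EucSp n) :=
  ⟨⟨K.toSet, K.1.isCompact⟩, K.1.nonempty⟩

theorem Kn.isometry_toNonemptyCompacts : Isometry (Kn.toNonemptyCompacts (n := n)) :=
  Isometry.of_dist_eq fun _ _ => rfl

theorem Kn.isCompact_setOf_superset_subset {S C : Set (EucSp n)} (hS : (interior S).Nonempty)
    (hC : IsCompact C) : IsCompact {K : Kn n | S ⊆ K.toSet ∧ K.toSet ⊆ C} := by
  have := Kn.isometry_toNonemptyCompacts.isEmbedding.isInducing.isCompact_preimage'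
    (NonemptyCompacts.isCompact_setOf_subset_convex_superset (S := S) hC) ?_
  · convert this using 1
    ext K
    exact ⟨fun ⟨hS, hC⟩ => ⟨hC, K.1.convex, hS⟩, fun ⟨hC, _, hS⟩ => ⟨hS, hC⟩⟩
  · rintro A ⟨hAC, hconv, hSA⟩
    exact ⟨⟨⟨A, hconv, A.isCompact, A.nonempty⟩, hS.mono (interior_mono hSA)⟩, rfl⟩

theorem Kn.exists_forall_le_of_affImage_invariant {f : Kn n → ℝ} (hf : Continuous f)
    (hinv : ∀ T K, f (affImage T K) = f K) : ∃ K₀, ∀ K, f K ≤ f K₀ := by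
  have hnorm := Kn.exists_unitSimplex_subset_subset_unitCube (n := n)
  obtain ⟨T, hT⟩ := hnorm (Classical.arbitrary _)
  obtain ⟨K₀, -, hK₀⟩ := (Kn.isCompact_setOf_superset_subset interior_unitSimplex_nonempty
    isCompact_unitCube).exists_isMaxOn ⟨_, hT⟩ hf.continuousOn
  refine ⟨K₀, fun K => ?_⟩
  obtain ⟨T, hT⟩ := hnorm K
  exact hinv T K ▸ hK₀ hT

theorem Kn.sub_mem_smul_of_centeredGauge_lt {p q : Kn n → EucSp n} {K : Kn n}
    (hpK : p K ∈ interior K.toSet) {c : ℝ} (h : centeredGauge p q K < c) :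
    q K - p K ∈ c • ((fun x => x - p K) '' K.toSet) := by
  have h₀ : (0 : EucSp n) ∈ interior ((· - p K) '' K.toSet) := by
    simpa using sub_mem_interior_image_sub_const (x := p K) hpK
  exact mem_smul_of_gauge_lt (K.1.convex.image_sub_const _) (interior_subset h₀)
    (absorbent_nhds_zero (mem_interior_iff_mem_nhds.mp h₀)) h

end Kn

/-- For affine invariant points `p, q` with `p` proper, the map
`φ_q(K) = inf {t ≥ 0 : q(K) − p(K) ∈ t(K − p(K))}` is continuous; there is `c > 0` with
`q(K) − p(K) ∈ c(K − p(K))` for all `K`; and if `q` is proper, `c` may be chosen in `(0,1)`. -/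
theorem statement3 (n : ℕ) (p q : Kn n → EucSp n)
    (hp : IsAffineInvariantPoint p) (hq : IsAffineInvariantPoint q)
    (hproper : ∀ K : Kn n, p K ∈ interior K.toSet) :
    Continuous (fun K : Kn n =>
        sInf {t : ℝ | 0 ≤ t ∧ q K - p K ∈ t • ((fun x => x - p K) '' K.toSet)}) ∧
    (∃ c : ℝ, 0 < c ∧ ∀ K : Kn n,
        q K - p K ∈ c • ((fun x => x - p K) '' K.toSet)) ∧
    ((∀ K : Kn n, q K ∈ interior K.toSet) →
      ∃ c : ℝ, 0 < c ∧ c < 1 ∧ ∀ K : Kn n,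
        q K - p K ∈ c • ((fun x => x - p K) '' K.toSet)) := by
  have hcont := continuous_centeredGauge hp.1 hq.1 hproper
  obtain ⟨K₀, hK₀⟩ := Kn.exists_forall_le_of_affImage_invariant hcont (centeredGauge_affImage hp hq)
  have hM : 0 ≤ centeredGauge p q K₀ := gauge_nonneg _
  refine ⟨?_, ⟨centeredGauge p q K₀ + 1, by linarith,
    fun K => Kn.sub_mem_smul_of_centeredGauge_lt (hproper K) (by linarith [hK₀ K])⟩, fun hq' => ?_⟩
  · exact hcont.congr fun K =>
      (sInf_setOf_nonneg_mem_smul_eq_gauge (K.1.nonempty.image _) _).symm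
  · have hM₁ : centeredGauge p q K₀ < 1 :=
      interior_subset_gauge_lt_one _ (sub_mem_interior_image_sub_const (hq' K₀))
    exact ⟨(centeredGauge p q K₀ + 1) / 2, by linarith, by linarith,
      fun K => Kn.sub_mem_smul_of_centeredGauge_lt (hproper K) (by linarith [hK₀ K])⟩
end

section
/- Let A be an affine invariant set mapping on 𝒦ₙ. Then there exists d > 0 such that vol(A(K)) ≥ d·vol(K) for every K ∈ 𝒦ₙ. -/
open scoped Pointwise
open MeasureTheory

/-!
Send the vertices of a simplex of maximal volume inscribed in `K` to `0, e₁, …, eₙ` by an affine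
map `T`; maximality bounds every coordinate on `T K` by `1`. The normalized bodies, squeezed between
the simplex `conv {0, e₁, …, eₙ}` and a fixed ball, form a compact subset of `𝒦ₙ`. A convex body
Hausdorff-close to one containing a ball `B(x, r)` contains `B(x, r/2)`, so `vol ∘ A` is locally
bounded below by positive constants, hence by a uniform `c > 0` on the compact set. Since `A`
commutes with `T` and both volumes scale by `|det T|`, `vol (A K) / vol K` is at least `c` divided
by the volume of the ball.
-/

open Set Metric Filter Topology TopologicalSpace

namespace Module.Basis
variable {ι R M : Type*} [Fintype ι] [DecidableEq ι] [CommRing R] [AddCommGroup M] [Module R M]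

theorem det_update_self (b : Basis ι R M) (j : ι) (u : M) :
    b.det (Function.update b j u) = b.repr u j := by
  rw [det_apply, toMatrix_update, toMatrix_self]
  simpa [Matrix.one_apply] using Matrix.det_updateCol_sum (1 : Matrix ι ι R) j (b.repr u)

end Module.Basis

section Simplex

variable {ι E : Type*} [Fintype ι] [DecidableEq ι] [NormedAddCommGroup E] [NormedSpace ℝ E]

theorem continuous_basis_det_sub (e : Module.Basis ι ℝ E) :
    Continuous fun pv : E × (ι → E) => e.det fun i => pv.2 i - pv.1 := by
  simp only [Module.Basis.det_apply]
  refine Continuous.matrix_det (continuous_matrix fun i j => ?_)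
  exact ((continuous_apply i).comp e.equivFunL.continuous).comp
    (((continuous_apply j).comp continuous_snd).sub continuous_fst)

theorem exists_basis_det_sub_ne_zero (e : Module.Basis ι ℝ E) {K : Set E}
    (hK : (interior K).Nonempty) :
    ∃ p ∈ K, ∃ v : ι → E, (∀ i, v i ∈ K) ∧ e.det (fun i => v i - p) ≠ 0 := by
  obtain ⟨p, hp⟩ := hK
  have hnear : ∀ᶠ t : ℝ in 𝓝[≠] 0, ∀ i, p + t • e i ∈ interior K := by
    refine eventually_all.2 fun i => nhdsWithin_le_nhds ?_
    have : Tendsto (fun t : ℝ => p + t • e i) (𝓝 0) (𝓝 p) := by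
      simpa using tendsto_const_nhds.add ((tendsto_id (x := 𝓝 (0 : ℝ))).smul_const (e i))
    exact this (isOpen_interior.mem_nhds hp)
  obtain ⟨t, ht, ht0⟩ := (hnear.and self_mem_nhdsWithin).exists
  refine ⟨p, interior_subset hp, fun i => p + t • e i, fun i => interior_subset (ht i), ?_⟩
  simpa [e.det.map_smul_univ (fun _ => t) e, e.det_self] using pow_ne_zero (Fintype.card ι) ht0

theorem exists_isMaxOn_abs_basis_det_sub (e : Module.Basis ι ℝ E) {K : Set E}
    (hK : IsCompact K) (hint : (interior K).Nonempty) :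
    ∃ p ∈ K, ∃ v : ι → E, (∀ i, v i ∈ K) ∧ e.det (fun i => v i - p) ≠ 0 ∧
      ∀ q ∈ K, ∀ w : ι → E, (∀ i, w i ∈ K) →
        |e.det (fun i => w i - q)| ≤ |e.det (fun i => v i - p)| := by
  have hP : IsCompact (K ×ˢ univ.pi fun _ : ι => K) := hK.prod (isCompact_univ_pi fun _ => hK)
  obtain ⟨p₀, hp₀, v₀, hv₀, hdet₀⟩ := exists_basis_det_sub_ne_zero e hint
  obtain ⟨⟨p, v⟩, ⟨hp, hv⟩, hmax⟩ := hP.exists_isMaxOn ⟨(p₀, v₀), hp₀, fun i _ => hv₀ i⟩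
    (continuous_basis_det_sub e).abs.continuousOn
  refine ⟨p, hp, v, fun i => hv i (mem_univ i), fun h => hdet₀ ?_,
    fun q hq w hw => hmax (mk_mem_prod hq fun i _ => hw i)⟩
  simpa [h] using hmax (mk_mem_prod hp₀ fun i _ => hv₀ i)

theorem exists_affineEquiv_convexHull_subset_image (e : Module.Basis ι ℝ E) {K : Set E}
    (hK : IsCompact K) (hconv : Convex ℝ K) (hint : (interior K).Nonempty) :
    ∃ T : E ≃ᵃ[ℝ] E, convexHull ℝ (insert 0 (range e)) ⊆ T '' K ∧
      ∀ y ∈ T '' K, ∀ j, |e.repr y j| ≤ 1 := by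
  obtain ⟨p, hp, v, hv, hdet, hmax⟩ := exists_isMaxOn_abs_basis_det_sub e hK hint
  obtain ⟨hli, hspan⟩ := (e.is_basis_iff_det).2 (isUnit_iff_ne_zero.2 hdet)
  set b := Module.Basis.mk hli hspan.ge
  have hb : (fun i => v i - p) = b := funext fun i => (Module.Basis.mk_apply hli hspan.ge i).symm
  let T : E ≃ᵃ[ℝ] E :=
    (AffineEquiv.vaddConst ℝ p).symm.trans (b.repr.trans e.repr.symm).toAffineEquiv
  have hT : ∀ z, e.repr (T z) = b.repr (z - p) := fun z => by simp [T]
  refine ⟨T, convexHull_min ?_ (hconv.affine_image T.toAffineMap), ?_⟩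
  · have hTp : T p = 0 := e.repr.injective (by rw [hT, sub_self, map_zero, map_zero])
    have hTv : ∀ i, T (v i) = e i :=
      fun i => e.repr.injective (by rw [hT, congrFun hb i, b.repr_self, e.repr_self])
    rintro _ (rfl | ⟨i, rfl⟩)
    · exact ⟨p, hp, hTp⟩
    · exact ⟨v i, hv i, hTv i⟩
  · rintro _ ⟨y, hy, rfl⟩ j
    have hdet_update : e.det (fun i => Function.update v j y i - p) =
        e.det (fun i => v i - p) * b.repr (y - p) j := by
      have hupd : (fun i => Function.update v j y i - p) = Function.update b j (y - p) := by
        ext1 i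
        rcases eq_or_ne i j with rfl | h
        · simp
        · simp [h, ← hb]
      rw [hupd, hb]
      conv_lhs => rw [e.det.eq_smul_basis_det b]
      rw [AlternatingMap.smul_apply, smul_eq_mul, b.det_update_self]
    have hmax_j := hmax p hp (Function.update v j y) fun i => by
      rcases eq_or_ne i j with rfl | h
      · simpa using hy
      · simpa [h] using hv i
    rw [hdet_update, abs_mul] at hmax_j
    rw [hT]
    exact (mul_le_iff_le_one_right (abs_pos.2 hdet)).1 hmax_j

end Simplex

theorem interior_convexHull_insert_zero_range_nonempty {ι E : Type*} [Finite ι]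
    [NormedAddCommGroup E] [NormedSpace ℝ E] [FiniteDimensional ℝ E] (e : Module.Basis ι ℝ E) :
    (interior (convexHull ℝ (insert 0 (range e)))).Nonempty := by
  rw [(convex_convexHull ℝ _).interior_nonempty_iff_affineSpan_eq_top, affineSpan_convexHull,
    ← AffineSubspace.coe_eq_univ_iff, affineSpan_insert_zero, e.span_eq, Submodule.top_coe]

theorem EuclideanSpace.norm_le_sqrt_card {ι : Type*} [Fintype ι] {y : EuclideanSpace ℝ ι}
    (hy : ∀ j, |y j| ≤ 1) : ‖y‖ ≤ √(Fintype.card ι) := by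
  rw [EuclideanSpace.norm_eq]
  gcongr
  calc ∑ j, ‖y j‖ ^ 2 ≤ ∑ _j : ι, (1 : ℝ) := by
        gcongr with j; rw [Real.norm_eq_abs, sq_le_one_iff_abs_le_one, abs_abs]; exact hy j
    _ = Fintype.card ι := by simp

theorem MeasureTheory.Measure.addHaar_image_affineEquiv {E : Type*} [NormedAddCommGroup E]
    [NormedSpace ℝ E] [MeasurableSpace E] [BorelSpace E] [FiniteDimensional ℝ E]
    (μ : Measure E) [μ.IsAddHaarMeasure] (T : E ≃ᵃ[ℝ] E) (s : Set E) :
    μ (T '' s) = ENNReal.ofReal |LinearMap.det (T.linear : E →ₗ[ℝ] E)| * μ s := by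
  have hT : ⇑T = (· + T 0) ∘ T.linear := funext fun x => by simpa using T.map_vadd 0 x
  rw [hT, image_comp, image_add_right, measure_preimage_add_right]
  exact addHaar_image_linearMap μ (T.linear : E →ₗ[ℝ] E) s

theorem closedBall_subset_of_forall_infDist_lt {E : Type*} [NormedAddCommGroup E]
    [InnerProductSpace ℝ E] [CompleteSpace E] {K L : Set E} (hLc : Convex ℝ L)
    (hLcl : IsClosed L) (hLne : L.Nonempty) {x : E} {r δ : ℝ} (hr : 0 ≤ r)
    (hK : closedBall x r ⊆ K) (hKL : ∀ p ∈ K, infDist p L < δ) : closedBall x (r - δ) ⊆ L := by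
  intro z hz
  by_contra hzL
  obtain ⟨f, u, hfL, hfz⟩ := geometric_hahn_banach_closed_point hLc hLcl hzL
  set w := (InnerProductSpace.toDual ℝ E).symm f
  have hf : ∀ y, f y = inner ℝ w y := fun y => (InnerProductSpace.toDual_symm_apply).symm
  have hw : 0 < ‖w‖ := by
    obtain ⟨a, ha⟩ := hLne
    refine norm_pos_iff.2 fun h => ?_
    have := hfL a ha
    simp only [hf, h, inner_zero_left] at this hfz
    linarith
  have hpK : x + (r / ‖w‖) • w ∈ K := by
    apply hK
    rw [mem_closedBall, dist_eq_norm, add_sub_cancel_left, norm_smul, Real.norm_eq_abs,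
      abs_of_nonneg (by positivity), div_mul_cancel₀ r hw.ne']
  obtain ⟨a, haL, hpa⟩ := (infDist_lt_iff hLne).1 (hKL _ hpK)
  have h1 : f (x + (r / ‖w‖) • w) = f x + r * ‖w‖ := by
    rw [map_add, map_smul, hf w, real_inner_self_eq_norm_sq, smul_eq_mul]
    field_simp
  have h2 : f (x + (r / ‖w‖) • w) - f a < δ * ‖w‖ := by
    rw [← map_sub, hf, mul_comm]
    calc _ ≤ ‖w‖ * ‖x + (r / ‖w‖) • w - a‖ := real_inner_le_norm _ _
      _ < ‖w‖ * δ := by rw [← dist_eq_norm]; gcongr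
  have h3 : f z - f x ≤ (r - δ) * ‖w‖ := by
    rw [← map_sub, hf, mul_comm]
    calc _ ≤ ‖w‖ * ‖z - x‖ := real_inner_le_norm _ _
      _ ≤ ‖w‖ * (r - δ) := by rw [← dist_eq_norm]; gcongr; exact hz
  linarith [hfL a haL]

namespace TopologicalSpace.NonemptyCompacts

section Metric
variable {α : Type*} [MetricSpace α]

theorem exists_dist_lt_of_dist_lt {F G : NonemptyCompacts α} {x : α} (hx : x ∈ F) {r : ℝ}
    (h : dist F G < r) : ∃ y ∈ G, dist x y < r :=
  exists_dist_lt_of_hausdorffDist_lt hx (by rwa [← NonemptyCompacts.dist_eq])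
    (hausdorffEDist_ne_top_of_nonempty_of_bounded F.nonempty G.nonempty
      F.isCompact.isBounded G.isCompact.isBounded)

theorem isClosed_setOf_superset_s9 (s : Set α) : IsClosed {F : NonemptyCompacts α | s ⊆ F} := by
  simp only [ofPred_forall, subset_def]
  refine isClosed_biInter fun x _ => ?_
  have : {F : NonemptyCompacts α | x ∈ (F : Set α)} =
      (fun F : NonemptyCompacts α => infDist x F) ⁻¹' {0} := by
    ext F
    exact F.isCompact.isClosed.mem_iff_infDist_zero F.nonempty
  rw [this]
  exact isClosed_singleton.preimage (lipschitz_infDist_set x).continuous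

theorem isCompact_setOf_subset [CompleteSpace α] {B : Set α} (hB : IsCompact B) :
    IsCompact {F : NonemptyCompacts α | (F : Set α) ⊆ B} := by
  refine (totallyBounded_subsets_of_totallyBounded hB.totallyBounded).isCompact_of_isClosed ?_
  exact (Closeds.isClosed_subsets_of_isClosed hB.isClosed).preimage continuous_toCloseds

end Metric

theorem isClosed_setOf_convex_s9 {E : Type*} [NormedAddCommGroup E] [NormedSpace ℝ E] :
    IsClosed {F : NonemptyCompacts E | Convex ℝ (F : Set E)} := by
  refine isClosed_of_closure_subset fun F hF x hx y hy a b ha hb hab => ?_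
  refine F.isCompact.isClosed.closure_subset_iff.2 subset_rfl
    (Metric.mem_closure_iff.2 fun ε hε => ?_)
  obtain ⟨G, hG, hFG⟩ := Metric.mem_closure_iff.1 hF (ε / 2) (half_pos hε)
  obtain ⟨x', hx', hxx'⟩ := exists_dist_lt_of_dist_lt hx hFG
  obtain ⟨y', hy', hyy'⟩ := exists_dist_lt_of_dist_lt hy hFG
  obtain ⟨w, hw, hzw⟩ := exists_dist_lt_of_dist_lt (hG hx' hy' ha hb hab) (by rwa [dist_comm])
  have : dist (a • x + b • y) (a • x' + b • y') ≤ ε / 2 := calc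
    _ ≤ dist (a • x) (a • x') + dist (b • y) (b • y') := dist_add_add_le _ _ _ _
    _ = a * dist x x' + b * dist y y' := by
      rw [dist_smul₀, dist_smul₀, Real.norm_of_nonneg ha, Real.norm_of_nonneg hb]
    _ ≤ a * (ε / 2) + b * (ε / 2) := by gcongr
    _ = ε / 2 := by rw [← add_mul, hab, one_mul]
  exact ⟨w, hw, by linarith [dist_triangle (a • x + b • y) (a • x' + b • y') w]⟩

end TopologicalSpace.NonemptyCompacts

theorem IsCompact.exists_pos_forall_le_of_eventually {X : Type*} [TopologicalSpace X]
    {S : Set X} (hS : IsCompact S) {f : X → ℝ} (h : ∀ x ∈ S, ∃ c > 0, ∀ᶠ y in 𝓝 x, c ≤ f y) :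
    ∃ c > 0, ∀ x ∈ S, c ≤ f x := by
  refine hS.induction_on (p := fun s => ∃ c > 0, ∀ x ∈ s, c ≤ f x) ⟨1, one_pos, by simp⟩
    (fun s t hst ⟨c, hc, ht⟩ => ⟨c, hc, fun x hx => ht x (hst hx)⟩)
    (fun s t ⟨c, hc, hs⟩ ⟨d, hd, ht⟩ => ⟨min c d, lt_min hc hd, ?_⟩) fun x hx => ?_
  · rintro x (hx | hx)
    · exact (min_le_left c d).trans (hs x hx)
    · exact (min_le_right c d).trans (ht x hx)
  · obtain ⟨c, hc, hev⟩ := h x hx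
    exact ⟨_, mem_nhdsWithin_of_mem_nhds hev, c, hc, fun y hy => hy⟩

namespace Kn

variable {n : ℕ}

def toNonemptyCompacts_s9 (K : Kn n) : NonemptyCompacts (EucSp n) :=
  ⟨⟨K.toSet, K.1.isCompact⟩, K.1.nonempty⟩

theorem isometry_toNonemptyCompacts_s9 : Isometry (toNonemptyCompacts_s9 (n := n)) :=
  Isometry.of_dist_eq fun K L => by
    rw [NonemptyCompacts.dist_eq]
    exact ConvexBody.hausdorffDist_coe (K := K.1) (L := L.1)

theorem volume_ne_top (K : Kn n) : volume K.toSet ≠ ⊤ :=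
  K.1.isCompact.measure_lt_top.ne

theorem volume_affImage (T : EucSp n ≃ᵃ[ℝ] EucSp n) (K : Kn n) :
    (volume (affImage T K).toSet).toReal =
      |LinearMap.det (T.linear : EucSp n →ₗ[ℝ] EucSp n)| * (volume K.toSet).toReal := by
  rw [show (affImage T K).toSet = T '' K.toSet from rfl, Measure.addHaar_image_affineEquiv,
    ENNReal.toReal_mul, ENNReal.toReal_ofReal (abs_nonneg _)]

theorem isCompact_setOf_subset_subset {Δ B : Set (EucSp n)} (hΔ : (interior Δ).Nonempty)
    (hB : IsCompact B) : IsCompact {K : Kn n | Δ ⊆ K.toSet ∧ K.toSet ⊆ B} := by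
  rw [isometry_toNonemptyCompacts_s9.isEmbedding.isCompact_iff]
  have : toNonemptyCompacts_s9 '' {K : Kn n | Δ ⊆ K.toSet ∧ K.toSet ⊆ B} =
      {F : NonemptyCompacts (EucSp n) | (F : Set (EucSp n)) ⊆ B} ∩
        ({F | Convex ℝ (F : Set (EucSp n))} ∩ {F | Δ ⊆ F}) := by
    ext F
    constructor
    · rintro ⟨K, ⟨hΔK, hKB⟩, rfl⟩
      exact ⟨hKB, K.1.convex, hΔK⟩
    · rintro ⟨hFB, hF, hΔF⟩
      exact ⟨⟨⟨F, hF, F.isCompact, F.nonempty⟩, hΔ.mono (interior_mono hΔF)⟩, ⟨hΔF, hFB⟩, rfl⟩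
  rw [this]
  exact (NonemptyCompacts.isCompact_setOf_subset hB).inter_right
    (NonemptyCompacts.isClosed_setOf_convex_s9.inter (NonemptyCompacts.isClosed_setOf_superset_s9 Δ))

theorem exists_pos_eventually_le_volume (K₀ : Kn n) :
    ∃ c > 0, ∀ᶠ K in 𝓝 K₀, c ≤ (volume K.toSet).toReal := by
  obtain ⟨x, hx⟩ := K₀.2
  obtain ⟨r, hr, hball⟩ := nhds_basis_closedBall.mem_iff.1 (isOpen_interior.mem_nhds hx)
  refine ⟨(volume (closedBall x (r / 2))).toReal,
    ENNReal.toReal_pos (measure_closedBall_pos _ _ (half_pos hr)).ne' measure_closedBall_lt_top.ne,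
    ?_⟩
  filter_upwards [ball_mem_nhds K₀ (half_pos hr)] with K hK
  have hsub : closedBall x (r - r / 2) ⊆ K.toSet := by
    refine closedBall_subset_of_forall_infDist_lt K.1.convex K.1.isCompact.isClosed K.1.nonempty
      hr.le (hball.trans interior_subset) fun p hp => ?_
    obtain ⟨y, hy, hpy⟩ := NonemptyCompacts.exists_dist_lt_of_dist_lt
      (F := toNonemptyCompacts_s9 K₀) (G := toNonemptyCompacts_s9 K) hp
      (by rwa [isometry_toNonemptyCompacts_s9.dist_eq, dist_comm])
    exact (infDist_le_dist_of_mem hy).trans_lt hpy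
  rw [sub_half] at hsub
  exact ENNReal.toReal_mono K.volume_ne_top (measure_mono hsub)

-- The radius is `√n + 1` rather than `√n` so that the ball has positive volume also for `n = 0`.
def normalized (n : ℕ) : Set (Kn n) :=
  {K | convexHull ℝ (insert 0 (range (EuclideanSpace.basisFun (Fin n) ℝ).toBasis)) ⊆ K.toSet ∧
    K.toSet ⊆ closedBall 0 (√n + 1)}

theorem isCompact_normalized : IsCompact (normalized n) :=
  isCompact_setOf_subset_subset (interior_convexHull_insert_zero_range_nonempty _)
    (isCompact_closedBall 0 _)

theorem exists_affImage_mem_normalized (K : Kn n) :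
    ∃ T : EucSp n ≃ᵃ[ℝ] EucSp n, affImage T K ∈ normalized n := by
  obtain ⟨T, hΔ, hcube⟩ :=
    exists_affineEquiv_convexHull_subset_image (EuclideanSpace.basisFun (Fin n) ℝ).toBasis
      K.1.isCompact K.1.convex K.2
  refine ⟨T, hΔ, fun y hy => mem_closedBall_zero_iff.2 ?_⟩
  calc ‖y‖ ≤ √(Fintype.card (Fin n)) :=
        EuclideanSpace.norm_le_sqrt_card fun j => by simpa using hcube y hy j
    _ ≤ √n + 1 := by simp

end Kn

/-- For every affine invariant set mapping `A` there is `d > 0` such that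
`vol(A(K)) ≥ d · vol(K)` for every `K ∈ 𝒦ₙ`. -/
theorem statement9 (n : ℕ) (A : Kn n → Kn n) (hA : IsAffineInvariantSetMap A) :
    ∃ d : ℝ, 0 < d ∧ ∀ K : Kn n,
      d * (volume K.toSet).toReal ≤ (volume (A K).toSet).toReal := by
  obtain ⟨hAcont, hAaff⟩ := hA
  obtain ⟨c, hc, hcA⟩ := Kn.isCompact_normalized.exists_pos_forall_le_of_eventually
    (f := fun K => (volume (A K).toSet).toReal) fun K _ => by
      obtain ⟨c, hc, hK⟩ := Kn.exists_pos_eventually_le_volume (A K)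
      exact ⟨c, hc, hAcont.continuousAt hK⟩
  set M := (volume (closedBall (0 : EucSp n) (√n + 1))).toReal
  have hM : 0 < M :=
    ENNReal.toReal_pos (measure_closedBall_pos _ _ (by positivity)).ne' measure_closedBall_lt_top.ne
  refine ⟨c / M, div_pos hc hM, fun K => ?_⟩
  obtain ⟨T, hTK⟩ := Kn.exists_affImage_mem_normalized K
  set l := |LinearMap.det (T.linear : EucSp n →ₗ[ℝ] EucSp n)|
  have hA_TK : c ≤ l * (volume (A K).toSet).toReal := by
    simpa only [hAaff, Kn.volume_affImage] using hcA _ hTK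
  have hTK_M : l * (volume K.toSet).toReal ≤ M := by
    rw [← Kn.volume_affImage]
    exact ENNReal.toReal_mono measure_closedBall_lt_top.ne (measure_mono hTK.2)
  calc c / M * (volume K.toSet).toReal
      ≤ l * (volume (A K).toSet).toReal / M * (volume K.toSet).toReal := by gcongr
    _ = (volume (A K).toSet).toReal * (l * (volume K.toSet).toReal) / M := by ring
    _ ≤ (volume (A K).toSet).toReal * M / M := by gcongr
    _ = (volume (A K).toSet).toReal := mul_div_cancel_right₀ _ hM.ne'
end
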